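/- arXiv:2311.05378 — 4 statements merged into one kernel-verified Lean document; each statement's English description precedes it below -/
import Mathlib

section
/- Fix r, T > 0 with 2rT < z̃², where z̃ is the unique positive solution of z sinh z = cosh z. Set γ = √(2(r + 1/T)) and define ℓ : [√T, ∞) → ℝ by ℓ(b) = γ sinh(γ(b−√T)) · [ b cosh(√(2rT)) − (1/√(2r)) sinh(√(2rT)) − (b−√T)/(rT+1) − e^{−γ(b−√T)}/(γ(rT+1)) ] + cosh(γ(b−√T)) · [ √(2r) · b · sinh(√(2rT)) − cosh(√(2rT)) + (1 − e^{−γ(b−√T)})/(rT+1) ]. Then ℓ is strictly increasing on [√T, ∞) and ℓ(b) → ∞ as b → ∞. -/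
/-!
Writing `u = γ (b - √T)` and using `e^{-u} (sinh u + cosh u) = 1`, the exponential terms of `ℓ`
collapse to `(cosh u - 1) / (rT + 1)`. Differentiating the resulting expression, the `sinh u`
terms combine to `γ √(2r) sinh(√(2rT)) b sinh u ≥ 0`, and the `cosh u` term is positive because
the factor multiplying `γ sinh u` in `ℓ` is positive on `[√T, ∞)`: it is affine with slope
`cosh(√(2rT)) - 1/(rT + 1) ≥ 0` and value `√T cosh x - sinh x / √(2r) > 0` at `√T`
(`x = √(2rT)`, `sinh x < x cosh x`). For large `b` every term of `ℓ` is bounded below by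
`0` except `cosh u · (√(2r) b sinh x - cosh x) ≥ √(2r) b sinh x - cosh x`, which tends to `∞`.
-/

open Real Filter

theorem Real.sinh_lt_mul_cosh {x : ℝ} (hx : 0 < x) : sinh x < x * cosh x := by
  have hmono : StrictMonoOn (fun y => y * cosh y - sinh y) (Set.Ici 0) := by
    refine strictMonoOn_of_deriv_pos (convex_Ici 0) (by fun_prop) fun y hy => ?_
    rw [interior_Ici] at hy
    have hderiv : HasDerivAt (fun y => y * cosh y - sinh y) (y * sinh y) y := by
      refine (((hasDerivAt_id y).mul (hasDerivAt_cosh y)).sub (hasDerivAt_sinh y)).congr_deriv ?_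
      simp
    rw [hderiv.deriv]
    exact mul_pos hy (sinh_pos_iff.2 hy)
  simpa using hmono Set.self_mem_Ici (Set.mem_Ici.2 hx.le) hx

theorem mul_sinh_mul_add_cosh_mul_exp_neg {γ : ℝ} (hγ : γ ≠ 0) (u P Q R : ℝ) :
    γ * sinh u * (P - exp (-u) / (γ * R)) + cosh u * (Q + (1 - exp (-u)) / R)
      = γ * sinh u * P + cosh u * Q + (cosh u - 1) / R := by
  have hexp : exp (-u) * (sinh u + cosh u) = 1 := by
    rw [sinh_add_cosh, ← exp_add, neg_add_cancel, exp_zero]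
  have hγγ : γ * γ⁻¹ = 1 := mul_inv_cancel₀ hγ
  simp only [div_eq_mul_inv, mul_inv]
  linear_combination (-(sinh u * exp (-u) * R⁻¹)) * hγγ - R⁻¹ * hexp

namespace SmoothFit

variable (γ s q R : ℝ)

/-- The factor of `γ sinh (γ (b - s))` in the smooth-fit function, with `s = √T`, `q = √(2r)`,
`R = rT + 1`, so that `q s = √(2rT)`. -/
noncomputable def coeff (b : ℝ) : ℝ :=
  b * cosh (q * s) - 1 / q * sinh (q * s) - (b - s) / R

noncomputable def reduced (b : ℝ) : ℝ :=
  γ * sinh (γ * (b - s)) * coeff s q R b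
    + cosh (γ * (b - s)) * (q * b * sinh (q * s) - cosh (q * s))
    + (cosh (γ * (b - s)) - 1) / R

variable {γ s q R}

theorem coeff_pos (hs : 0 < s) (hq : 0 < q) (hR : 1 ≤ R) {b : ℝ} (hb : s ≤ b) :
    0 < coeff s q R b := by
  have hslope : 1 / R ≤ cosh (q * s) :=
    ((div_le_one (by linarith)).2 hR).trans (one_le_cosh _)
  have hat_s : 1 / q * sinh (q * s) < s * cosh (q * s) := by
    rw [one_div_mul_eq_div, div_lt_iff₀ hq]
    linarith [sinh_lt_mul_cosh (mul_pos hq hs)]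
  have hcoeff : coeff s q R b
      = (cosh (q * s) - 1 / R) * (b - s) + (s * cosh (q * s) - 1 / q * sinh (q * s)) := by
    unfold coeff; ring
  rw [hcoeff]
  exact add_pos_of_nonneg_of_pos (mul_nonneg (sub_nonneg.2 hslope) (sub_nonneg.2 hb))
    (sub_pos.2 hat_s)

theorem hasDerivAt_reduced (b : ℝ) :
    HasDerivAt (reduced γ s q R)
      (cosh (γ * (b - s)) * (γ ^ 2 * coeff s q R b + q * sinh (q * s))
        + γ * q * sinh (q * s) * b * sinh (γ * (b - s))) b := by
  have hu : HasDerivAt (fun y => γ * (y - s)) γ b := by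
    simpa using ((hasDerivAt_id b).sub_const s).const_mul γ
  have hsinh := (hasDerivAt_sinh _).comp b hu
  have hcosh := (hasDerivAt_cosh _).comp b hu
  have hcoeff : HasDerivAt (coeff s q R) (cosh (q * s) - 1 / R) b := by
    refine ((((hasDerivAt_id b).mul_const _).sub_const _).sub
      (((hasDerivAt_id b).sub_const s).div_const R)).congr_deriv ?_
    simp
  have hlin : HasDerivAt (fun y => q * y * sinh (q * s) - cosh (q * s)) (q * sinh (q * s)) b := by
    refine ((((hasDerivAt_id b).const_mul q).mul_const _).sub_const _).congr_deriv ?_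
    simp
  refine ((((hsinh.const_mul γ).mul hcoeff).add (hcosh.mul hlin)).add
    ((hcosh.sub_const 1).div_const R)).congr_deriv ?_
  simp only [coeff, Function.comp_apply]
  ring

theorem strictMonoOn_reduced (hγ : 0 < γ) (hs : 0 < s) (hq : 0 < q) (hR : 1 ≤ R) :
    StrictMonoOn (reduced γ s q R) (Set.Ici s) := by
  refine strictMonoOn_of_deriv_pos (convex_Ici s)
    (fun b _ => (hasDerivAt_reduced b).continuousAt.continuousWithinAt) fun b hb => ?_
  rw [interior_Ici, Set.mem_Ioi] at hb
  rw [(hasDerivAt_reduced b).deriv]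
  have hsinh_x := sinh_pos_iff.2 (mul_pos hq hs)
  have hsinh_u := sinh_pos_iff.2 (mul_pos hγ (sub_pos.2 hb))
  have hb0 : 0 < b := hs.trans hb
  exact add_pos
    (mul_pos (cosh_pos _) (add_pos (mul_pos (pow_pos hγ 2) (coeff_pos hs hq hR hb.le))
      (mul_pos hq hsinh_x)))
    (mul_pos (mul_pos (mul_pos (mul_pos hγ hq) hsinh_x) hb0) hsinh_u)

theorem tendsto_reduced_atTop (hγ : 0 < γ) (hs : 0 < s) (hq : 0 < q) (hR : 1 ≤ R) :
    Tendsto (reduced γ s q R) atTop atTop := by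
  have hslope : 0 < q * sinh (q * s) := mul_pos hq (sinh_pos_iff.2 (mul_pos hq hs))
  refine tendsto_atTop_mono' atTop ?_
    (tendsto_atTop_add_const_right _ (-cosh (q * s)) (tendsto_id.const_mul_atTop hslope))
  filter_upwards [eventually_ge_atTop s, eventually_ge_atTop (cosh (q * s) / (q * sinh (q * s)))]
    with b hbs hb
  rw [div_le_iff₀ hslope] at hb
  have hu : 0 ≤ γ * (b - s) := mul_nonneg hγ.le (sub_nonneg.2 hbs)
  have hsinh := sinh_nonneg_iff.2 hu
  have hcosh := one_le_cosh (γ * (b - s))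
  have hcoeff := coeff_pos hs hq hR hbs
  have hlin : 0 ≤ q * b * sinh (q * s) - cosh (q * s) := by linarith
  have hsinh_term : 0 ≤ γ * sinh (γ * (b - s)) * coeff s q R b := by positivity
  have hcosh_term : q * b * sinh (q * s) - cosh (q * s)
      ≤ cosh (γ * (b - s)) * (q * b * sinh (q * s) - cosh (q * s)) :=
    le_mul_of_one_le_left hlin hcosh
  have hconst_term : 0 ≤ (cosh (γ * (b - s)) - 1) / R := div_nonneg (by linarith) (by linarith)
  simp only [reduced, id]
  linarith

end SmoothFit

theorem smooth_fit_function_strictMono_and_tendsto_atTop_general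
    (r T : ℝ) (hr : 0 < r) (hT : 0 < T)
    (γ : ℝ) (hγ : γ = Real.sqrt (2 * (r + 1 / T)))
    (ℓ : ℝ → ℝ)
    (hℓ : ∀ b : ℝ, ℓ b =
      γ * Real.sinh (γ * (b - Real.sqrt T)) *
        (b * Real.cosh (Real.sqrt (2 * r * T))
          - (1 / Real.sqrt (2 * r)) * Real.sinh (Real.sqrt (2 * r * T))
          - (b - Real.sqrt T) / (r * T + 1)
          - Real.exp (-(γ * (b - Real.sqrt T))) / (γ * (r * T + 1)))
      + Real.cosh (γ * (b - Real.sqrt T)) *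
        (Real.sqrt (2 * r) * b * Real.sinh (Real.sqrt (2 * r * T))
          - Real.cosh (Real.sqrt (2 * r * T))
          + (1 - Real.exp (-(γ * (b - Real.sqrt T)))) / (r * T + 1))) :
    StrictMonoOn ℓ (Set.Ici (Real.sqrt T)) ∧
      Tendsto ℓ atTop atTop := by
  have hγ0 : 0 < γ := hγ ▸ sqrt_pos.2 (by positivity)
  have hs : 0 < √T := sqrt_pos.2 hT
  have hq : 0 < √(2 * r) := sqrt_pos.2 (by positivity)
  have hR : 1 ≤ r * T + 1 := by nlinarith
  have hℓ_reduced : ℓ = SmoothFit.reduced γ (√T) (√(2 * r)) (r * T + 1) := by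
    funext b
    rw [hℓ, sqrt_mul (by positivity) T, mul_sinh_mul_add_cosh_mul_exp_neg hγ0.ne']
    rfl
  rw [hℓ_reduced]
  exact ⟨SmoothFit.strictMonoOn_reduced hγ0 hs hq hR, SmoothFit.tendsto_reduced_atTop hγ0 hs hq hR⟩

/-- Fix r, T > 0 with 2rT < z̃², where z̃ is the unique positive
solution of z sinh z = cosh z. With γ = √(2(r + 1/T)), the smooth-fit function
ℓ : [√T, ∞) → ℝ from Example 5.3 is strictly increasing on [√T, ∞) and
ℓ(b) → ∞ as b → ∞. -/
theorem smooth_fit_function_strictMono_and_tendsto_atTop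
    (r T : ℝ) (hr : 0 < r) (hT : 0 < T)
    (z : ℝ) (hz_pos : 0 < z) (hz_root : z * Real.sinh z = Real.cosh z)
    (hrT : 2 * r * T < z ^ 2)
    (γ : ℝ) (hγ : γ = Real.sqrt (2 * (r + 1 / T)))
    (ℓ : ℝ → ℝ)
    (hℓ : ∀ b : ℝ, ℓ b =
      γ * Real.sinh (γ * (b - Real.sqrt T)) *
        (b * Real.cosh (Real.sqrt (2 * r * T))
          - (1 / Real.sqrt (2 * r)) * Real.sinh (Real.sqrt (2 * r * T))
          - (b - Real.sqrt T) / (r * T + 1)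
          - Real.exp (-(γ * (b - Real.sqrt T))) / (γ * (r * T + 1)))
      + Real.cosh (γ * (b - Real.sqrt T)) *
        (Real.sqrt (2 * r) * b * Real.sinh (Real.sqrt (2 * r * T))
          - Real.cosh (Real.sqrt (2 * r * T))
          + (1 - Real.exp (-(γ * (b - Real.sqrt T)))) / (r * T + 1))) :
    StrictMonoOn ℓ (Set.Ici (Real.sqrt T)) ∧
      Tendsto ℓ atTop atTop :=
  smooth_fit_function_strictMono_and_tendsto_atTop_general r T hr hT γ hγ ℓ hℓ
end

section
/- Fix r, T > 0 with 2rT < z̃², where z̃ is the unique positive solution of z sinh z = cosh z. Set γ = √(2(r + 1/T)) and define ℓ : [√T, ∞) → ℝ by ℓ(b) = γ sinh(γ(b−√T)) · [ b cosh(√(2rT)) − (1/√(2r)) sinh(√(2rT)) − (b−√T)/(rT+1) − e^{−γ(b−√T)}/(γ(rT+1)) ] + cosh(γ(b−√T)) · [ √(2r) · b · sinh(√(2rT)) − cosh(√(2rT)) + (1 − e^{−γ(b−√T)})/(rT+1) ]. Then there exists a unique b* ∈ (√T, ∞) with ℓ(b*) = 0. -/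
/-!
Differentiating `ℓ`, all exponential terms cancel. With `δ = √(2r)` and `u = √(2rT) = δ√T`,
the identity `γ² = δ² + 2/T` and the bound `sinh u ≤ u cosh u` then give `ℓ' ≥ 2r√T > 0` on
`[√T, ∞)`. At the left end `ℓ(√T) = u sinh u - cosh u < 0`, since `t ↦ t sinh t - cosh t` is
increasing and vanishes at `z > u`. A function that starts below zero and whose derivative is
bounded below by a positive constant has exactly one zero.
-/

open Real Set

theorem existsUnique_zero_of_le_deriv {f f' : ℝ → ℝ} {a c : ℝ} (hc : 0 < c)
    (hf : ContinuousOn f (Ici a)) (hf' : ∀ x ∈ Ioi a, HasDerivAt f (f' x) x)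
    (hc_le : ∀ x ∈ Ioi a, c ≤ f' x) (ha : f a < 0) :
    ∃! b, a < b ∧ f b = 0 := by
  have hderiv : ∀ x ∈ interior (Ici a), c ≤ deriv f x := fun x hx => by
    rw [interior_Ici] at hx
    rw [(hf' x hx).deriv]
    exact hc_le x hx
  have hmono : StrictMonoOn f (Ici a) :=
    strictMonoOn_of_deriv_pos (convex_Ici a) hf fun x hx => hc.trans_le (hderiv x hx)
  have hab₁ : a < a - f a / c := by
    have : f a / c < 0 := div_neg_of_neg_of_pos ha hc
    linarith
  have hfb₁ : 0 ≤ f (a - f a / c) := by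
    have hgrowth := (convex_Ici a).mul_sub_le_image_sub_of_le_deriv hf
      (fun x hx => (hf' x (interior_Ici (a := a) ▸ hx)).differentiableAt.differentiableWithinAt)
      hderiv a self_mem_Ici _ hab₁.le hab₁.le
    have : c * (a - f a / c - a) = -f a := by field_simp; ring
    linarith
  obtain ⟨b, ⟨hab, -⟩, hb⟩ :=
    intermediate_value_Ioc hab₁.le (hf.mono Icc_subset_Ici_self) ⟨ha, hfb₁⟩
  exact ⟨b, ⟨hab, hb⟩, fun y ⟨hay, hy⟩ => hmono.injOn hay.le hab.le (hy.trans hb.symm)⟩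

theorem sinh_le_mul_cosh {t : ℝ} (ht : 0 ≤ t) : sinh t ≤ t * cosh t := by
  have := (convex_Icc 0 t).image_sub_le_mul_sub_of_deriv_le continuous_sinh.continuousOn
    differentiable_sinh.differentiableOn (C := cosh t) (fun x hx => by
      rw [interior_Icc] at hx
      rw [Real.deriv_sinh, cosh_le_cosh, abs_of_pos hx.1, abs_of_nonneg ht]
      exact hx.2.le) 0 ⟨le_rfl, ht⟩ t ⟨ht, le_rfl⟩ ht
  simpa [mul_comm] using this

theorem strictMonoOn_mul_sinh_sub_cosh :
    StrictMonoOn (fun t => t * sinh t - cosh t) (Ici 0) := by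
  have hd : ∀ x : ℝ, HasDerivAt (fun t => t * sinh t - cosh t) (x * cosh x) x := fun x =>
    (((hasDerivAt_id' x).mul (hasDerivAt_sinh x)).sub (hasDerivAt_cosh x)).congr_deriv (by ring)
  refine strictMonoOn_of_deriv_pos (convex_Ici 0) (by fun_prop) fun x hx => ?_
  rw [interior_Ici] at hx
  rw [(hd x).deriv]
  exact mul_pos hx (cosh_pos x)

noncomputable def smoothFit (r T γ b : ℝ) : ℝ :=
  γ * sinh (γ * (b - √T)) *
      (b * cosh √(2 * r * T) - (1 / √(2 * r)) * sinh √(2 * r * T)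
        - (b - √T) / (r * T + 1) - exp (-(γ * (b - √T))) / (γ * (r * T + 1)))
    + cosh (γ * (b - √T)) *
      (√(2 * r) * b * sinh √(2 * r * T) - cosh √(2 * r * T)
        + (1 - exp (-(γ * (b - √T)))) / (r * T + 1))

noncomputable def smoothFitDeriv (r T γ b : ℝ) : ℝ :=
  cosh (γ * (b - √T)) *
      (γ ^ 2 * (b * cosh √(2 * r * T) - (1 / √(2 * r)) * sinh √(2 * r * T)
        - (b - √T) / (r * T + 1)) + √(2 * r) * sinh √(2 * r * T))
    + γ * √(2 * r) * b * sinh √(2 * r * T) * sinh (γ * (b - √T))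

theorem hasDerivAt_smoothFit (r T : ℝ) {γ : ℝ} (hγ : γ ≠ 0) (b : ℝ) :
    HasDerivAt (smoothFit r T γ) (smoothFitDeriv r T γ b) b := by
  set s := √T
  set C := cosh √(2 * r * T)
  set S := sinh √(2 * r * T)
  set k := r * T + 1
  have hx : HasDerivAt (fun b : ℝ => γ * (b - s)) γ b := by
    simpa using ((hasDerivAt_id b).sub_const s).const_mul γ
  have hA : HasDerivAt (fun b => b * C - (1 / √(2 * r)) * S - (b - s) / k
      - exp (-(γ * (b - s))) / (γ * k))
      (1 * C - 1 / k - exp (-(γ * (b - s))) * (-γ) / (γ * k)) b :=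
    ((((hasDerivAt_id b).mul_const C).sub_const _).sub
      (((hasDerivAt_id b).sub_const s).div_const k)).sub ((hx.neg.exp).div_const (γ * k))
  have hB : HasDerivAt (fun b => √(2 * r) * b * S - C + (1 - exp (-(γ * (b - s)))) / k)
      (√(2 * r) * 1 * S + (0 - exp (-(γ * (b - s))) * (-γ)) / k) b :=
    ((((hasDerivAt_id b).const_mul _).mul_const S).sub_const C).add
      (((hasDerivAt_const b 1).sub hx.neg.exp).div_const k)
  refine (((hx.sinh.const_mul γ).mul hA).add (hx.cosh.mul hB)).congr_deriv ?_
  simp only [smoothFitDeriv]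
  field_simp
  ring

theorem smoothFit_sqrt (T γ : ℝ) {r : ℝ} (hr : 0 ≤ r) :
    smoothFit r T γ √T = √(2 * r * T) * sinh √(2 * r * T) - cosh √(2 * r * T) := by
  simp only [smoothFit, sub_self, mul_zero, sinh_zero, cosh_zero, neg_zero, exp_zero]
  rw [sqrt_mul (by positivity) T]
  ring

theorem two_mul_mul_le_smoothFitDeriv_coshCoeff {r T s b δ γ C S : ℝ} (hr : 0 ≤ r)
    (hT : 0 < T) (hs : 0 ≤ s) (hb : s ≤ b) (hδ : 0 < δ) (hδ_sq : δ ^ 2 = 2 * r)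
    (hγ_sq : γ ^ 2 = 2 * r + 2 / T) (hC : 1 ≤ C) (hS : S ≤ δ * s * C) :
    2 * r * s ≤ γ ^ 2 * (b * C - (1 / δ) * S - (b - s) / (r * T + 1)) + δ * S := by
  have hexcess :
      γ ^ 2 * (b * C - (1 / δ) * S - (b - s) / (r * T + 1)) + δ * S - 2 * r * b * C
        = 2 / T * (b * C - S / δ - (b - s)) := by
    rw [hγ_sq]
    field_simp
    linear_combination T * S * hδ_sq
  have hS_div : S / δ ≤ s * C := by
    rw [div_le_iff₀ hδ]
    linarith
  have hpos : 0 ≤ b * C - S / δ - (b - s) := by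
    nlinarith [mul_nonneg (sub_nonneg.2 hb) (sub_nonneg.2 hC)]
  nlinarith [mul_nonneg (by positivity : (0 : ℝ) ≤ 2 / T) hpos,
    mul_le_mul hb hC zero_le_one (hs.trans hb)]

theorem two_mul_mul_sqrt_le_smoothFitDeriv {r T b : ℝ} (hr : 0 < r) (hT : 0 < T)
    (hb : √T ≤ b) :
    2 * r * √T ≤ smoothFitDeriv r T √(2 * (r + 1 / T)) b := by
  set s := √T
  set γ := √(2 * (r + 1 / T))
  set δ := √(2 * r)
  set C := cosh √(2 * r * T)
  set S := sinh √(2 * r * T)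
  have hδ : 0 < δ := sqrt_pos.2 (by positivity)
  have hS_le : S ≤ δ * s * C := by
    rw [show δ * s = √(2 * r * T) from (sqrt_mul (by positivity) T).symm]
    exact sinh_le_mul_cosh (sqrt_nonneg _)
  have hcoeff := two_mul_mul_le_smoothFitDeriv_coshCoeff (γ := γ) hr.le hT (sqrt_nonneg T) hb hδ
    (sq_sqrt (by positivity)) (by rw [sq_sqrt (by positivity)]; ring) (one_le_cosh _) hS_le
  have hsinh_term : 0 ≤ γ * δ * b * S * sinh (γ * (b - s)) := by
    have : 0 ≤ S := sinh_nonneg_iff.2 (sqrt_nonneg _)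
    have : 0 ≤ sinh (γ * (b - s)) :=
      sinh_nonneg_iff.2 (mul_nonneg (sqrt_nonneg _) (sub_nonneg.2 hb))
    have : 0 ≤ b := (sqrt_nonneg T).trans hb
    positivity
  calc 2 * r * s
      ≤ γ ^ 2 * (b * C - (1 / δ) * S - (b - s) / (r * T + 1)) + δ * S := hcoeff
    _ ≤ cosh (γ * (b - s)) *
          (γ ^ 2 * (b * C - (1 / δ) * S - (b - s) / (r * T + 1)) + δ * S) :=
        le_mul_of_one_le_left ((by positivity : (0 : ℝ) ≤ 2 * r * s).trans hcoeff)
          (one_le_cosh _)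
    _ ≤ smoothFitDeriv r T γ b := by
        simp only [smoothFitDeriv]
        linarith

/-- Fix r, T > 0 with 2rT < z̃², where z̃ is the unique positive
solution of z sinh z = cosh z. With γ = √(2(r + 1/T)) and ℓ the smooth-fit
function from Example 5.3, there exists a unique b* ∈ (√T, ∞) with ℓ(b*) = 0. -/
theorem smooth_fit_function_has_unique_zero
    (r T : ℝ) (hr : 0 < r) (hT : 0 < T)
    (z : ℝ) (hz_pos : 0 < z) (hz_root : z * Real.sinh z = Real.cosh z)
    (hrT : 2 * r * T < z ^ 2)
    (γ : ℝ) (hγ : γ = Real.sqrt (2 * (r + 1 / T)))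
    (ℓ : ℝ → ℝ)
    (hℓ : ∀ b : ℝ, ℓ b =
      γ * Real.sinh (γ * (b - Real.sqrt T)) *
        (b * Real.cosh (Real.sqrt (2 * r * T))
          - (1 / Real.sqrt (2 * r)) * Real.sinh (Real.sqrt (2 * r * T))
          - (b - Real.sqrt T) / (r * T + 1)
          - Real.exp (-(γ * (b - Real.sqrt T))) / (γ * (r * T + 1)))
      + Real.cosh (γ * (b - Real.sqrt T)) *
        (Real.sqrt (2 * r) * b * Real.sinh (Real.sqrt (2 * r * T))
          - Real.cosh (Real.sqrt (2 * r * T))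
          + (1 - Real.exp (-(γ * (b - Real.sqrt T)))) / (r * T + 1))) :
    ∃! b : ℝ, Real.sqrt T < b ∧ ℓ b = 0 := by
  obtain rfl : ℓ = smoothFit r T γ := funext hℓ
  subst hγ
  have hγ_ne : √(2 * (r + 1 / T)) ≠ 0 := (sqrt_pos.2 (by positivity)).ne'
  have hu : √(2 * r * T) < z := (sqrt_lt' hz_pos).2 hrT
  have hstart : smoothFit r T √(2 * (r + 1 / T)) √T < 0 := by
    have := strictMonoOn_mul_sinh_sub_cosh (sqrt_nonneg (2 * r * T)) hz_pos.le hu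
    rw [smoothFit_sqrt T _ hr.le]
    linarith
  exact existsUnique_zero_of_le_deriv (c := 2 * r * √T) (by positivity)
    (fun x _ => (hasDerivAt_smoothFit r T hγ_ne x).continuousAt.continuousWithinAt)
    (fun x _ => hasDerivAt_smoothFit r T hγ_ne x)
    (fun x hx => two_mul_mul_sqrt_le_smoothFitDeriv hr hT hx.le) hstart
end

section
/- Let r, T > 0, a > 0, and set γ = √(2(r + 1/T)). A twice continuously differentiable even function J : (−a, a) → ℝ satisfies the ordinary differential equation ½ J''(x) − (r + 1/T) J(x) = −|x|/T for all x ∈ (−a, a) if and only if there exists ξ ∈ ℝ such that J(x) = ξ cosh(γ x) + |x|/(rT+1) + e^{−γ|x|}/(γ(rT+1)) for all x ∈ (−a, a). -/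
/-!
With `c = r T + 1` the equation reads `J'' = γ² (J - |x| / c)`. For `p t = t / c + e^{-γ t} / (γ c)`
one has `p'' = γ² (p - t / c)` and `p' 0 = 0`; the latter makes `x ↦ p |x|` twice differentiable
across `0`, so every `ξ cosh (γ x) + p |x|` is a solution on all of `ℝ`. Conversely, the difference
`u` of two solutions satisfies `u'' = γ² u`, and exponential integrating factors applied first to
`u' - γ u` and then to `u` show that `u` vanishes on the interval once `u 0 = u' 0 = 0`. An even `J`
has `J' 0 = 0`, so it agrees with the solution that has the same value at `0`.
-/

open Real Set Filter Topology

theorem HasDerivAt.of_eqOn_Iic_of_eqOn_Ici {f g h : ℝ → ℝ} {f' b x : ℝ}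
    (hfg : EqOn f g (Iic b)) (hfh : EqOn f h (Ici b))
    (hg : x ≤ b → HasDerivAt g f' x) (hh : b ≤ x → HasDerivAt h f' x) :
    HasDerivAt f f' x := by
  have hleft (hx : x ≤ b) : HasDerivWithinAt f f' (Iic b) x :=
    (hg hx).hasDerivWithinAt.congr hfg (hfg hx)
  have hright (hx : b ≤ x) : HasDerivWithinAt f f' (Ici b) x :=
    (hh hx).hasDerivWithinAt.congr hfh (hfh hx)
  rcases lt_trichotomy x b with hx | rfl | hx
  · exact (hleft hx.le).hasDerivAt (Iic_mem_nhds hx)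
  · simpa only [Iic_union_Ici, hasDerivWithinAt_univ] using
      (hleft le_rfl).union (hright le_rfl)
  · exact (hright hx.le).hasDerivAt (Ici_mem_nhds hx)

theorem hasDerivAt_comp_abs {g g' : ℝ → ℝ} {x : ℝ} (hg : HasDerivAt g (g' |x|) |x|)
    (hg'0 : g' 0 = 0) :
    HasDerivAt (fun y => g |y|) (SignType.sign x * g' |x|) x := by
  refine HasDerivAt.of_eqOn_Iic_of_eqOn_Ici (b := 0) (g := fun y => g (-y)) (h := g)
    (fun y hy => by simp [abs_of_nonpos (mem_Iic.1 hy)])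
    (fun y hy => by simp [abs_of_nonneg (mem_Ici.1 hy)]) (fun hx => ?_) (fun hx => ?_)
  · rw [abs_of_nonpos hx] at hg
    have : HasDerivAt (fun y => g (-y)) (g' (-x) * -1) x := hg.comp x (hasDerivAt_neg x)
    rcases hx.lt_or_eq with hx | rfl
    · simpa [hx, abs_of_neg hx] using this
    · simpa [hg'0] using this
  · rw [abs_of_nonneg hx] at hg
    rcases hx.lt_or_eq with hx | rfl
    · simpa [hx, abs_of_pos hx] using hg
    · simpa [hg'0] using hg

theorem hasDerivAt_sign_mul_comp_abs {g g' : ℝ → ℝ} {x : ℝ} (hg : HasDerivAt g (g' |x|) |x|)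
    (hg0 : g 0 = 0) :
    HasDerivAt (fun y => SignType.sign y * g |y|) (g' |x|) x := by
  refine HasDerivAt.of_eqOn_Iic_of_eqOn_Ici (b := 0) (g := fun y => -g (-y)) (h := g)
    (fun y hy => ?_) (fun y hy => ?_) (fun hx => ?_) (fun hx => ?_)
  · rcases (mem_Iic.1 hy).lt_or_eq with hy | rfl
    · simp [hy, abs_of_neg hy]
    · simp [hg0]
  · rcases (mem_Ici.1 hy).lt_or_eq with hy | rfl
    · simp [hy, abs_of_pos hy]
    · simp [hg0]
  · rw [abs_of_nonpos hx] at hg ⊢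
    have : HasDerivAt (fun y => g (-y)) (g' (-x) * -1) x := hg.comp x (hasDerivAt_neg x)
    simpa using this.fun_neg
  · rwa [abs_of_nonneg hx] at hg ⊢

theorem deriv_eq_zero_of_eventually_even {f : ℝ → ℝ} (hf : (fun x => f (-x)) =ᶠ[𝓝 0] f) :
    deriv f 0 = 0 := by
  have h : deriv (fun x => f (-x)) 0 = deriv f 0 := hf.deriv_eq
  rw [deriv_comp_neg, neg_zero] at h
  linarith

theorem eqOn_zero_of_hasDerivAt_eq_mul {s : Set ℝ} (hs : IsOpen s) (hs' : IsPreconnected s)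
    {w : ℝ → ℝ} {k x₀ : ℝ} (hw : ∀ x ∈ s, HasDerivAt w (k * w x) x) (hx₀ : x₀ ∈ s)
    (hw₀ : w x₀ = 0) : EqOn w 0 s := by
  have hχ : ∀ x ∈ s, HasDerivAt (fun y => exp (-(k * y)) * w y) 0 x := fun x hx => by
    have hexp : HasDerivAt (fun y => exp (-(k * y))) (exp (-(k * x)) * -k) x := by
      simpa using (hasDerivAt_const_mul k).fun_neg.exp
    exact (hexp.fun_mul (hw x hx)).congr_deriv (by ring)
  intro x hx
  have hχx := hs.is_const_of_deriv_eq_zero hs'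
    (fun y hy => (hχ y hy).differentiableAt.differentiableWithinAt) (fun y hy => (hχ y hy).deriv)
    hx hx₀
  simpa [hw₀, (exp_pos _).ne'] using hχx

theorem eqOn_zero_of_hasDerivAt_eq_sq_mul {s : Set ℝ} (hs : IsOpen s) (hs' : IsPreconnected s)
    {w w' : ℝ → ℝ} {γ x₀ : ℝ} (hw : ∀ x ∈ s, HasDerivAt w (w' x) x)
    (hw' : ∀ x ∈ s, HasDerivAt w' (γ ^ 2 * w x) x) (hx₀ : x₀ ∈ s) (hw₀ : w x₀ = 0)
    (hw'₀ : w' x₀ = 0) : EqOn w 0 s := by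
  have hv : EqOn (fun x => w' x - γ * w x) 0 s :=
    eqOn_zero_of_hasDerivAt_eq_mul hs hs' (k := -γ)
      (fun x hx => ((hw' x hx).fun_sub ((hw x hx).const_mul γ)).congr_deriv (by ring))
      hx₀ (by simp [hw₀, hw'₀])
  refine eqOn_zero_of_hasDerivAt_eq_mul hs hs' (k := γ) (fun x hx => ?_) hx₀ hw₀
  have hvx : w' x - γ * w x = 0 := hv hx
  exact (hw x hx).congr_deriv (by linarith)

noncomputable section

namespace RandomizationODE

variable {γ c : ℝ}

def profile (γ c t : ℝ) : ℝ := t / c + exp (-(γ * t)) / (γ * c)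

def profileDeriv (γ c t : ℝ) : ℝ := (1 - exp (-(γ * t))) / c

def solution (γ c ξ x : ℝ) : ℝ := ξ * cosh (γ * x) + profile γ c |x|

def solutionDeriv (γ c ξ x : ℝ) : ℝ :=
  ξ * (γ * sinh (γ * x)) + SignType.sign x * profileDeriv γ c |x|

theorem hasDerivAt_profile (hγ : γ ≠ 0) (t : ℝ) :
    HasDerivAt (profile γ c) (profileDeriv γ c t) t := by
  have := ((hasDerivAt_id' (x := t)).div_const c).fun_add
    ((hasDerivAt_const_mul γ).fun_neg.exp.div_const (γ * c))
  refine this.congr_deriv ?_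
  simp only [profileDeriv]
  field_simp
  ring

theorem hasDerivAt_profileDeriv (t : ℝ) :
    HasDerivAt (profileDeriv γ c) (γ * exp (-(γ * t)) / c) t := by
  have := ((hasDerivAt_const_mul (x := t) γ).fun_neg.exp.const_sub 1).div_const c
  exact this.congr_deriv (by ring)

theorem profileDeriv_zero : profileDeriv γ c 0 = 0 := by
  simp [profileDeriv]

theorem hasDerivAt_solution (hγ : γ ≠ 0) (ξ x : ℝ) :
    HasDerivAt (solution γ c ξ) (solutionDeriv γ c ξ x) x := by
  have hcosh : HasDerivAt (fun y => cosh (γ * y)) (sinh (γ * x) * γ) x :=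
    (hasDerivAt_const_mul γ).cosh
  refine ((hcosh.const_mul ξ).fun_add
    (hasDerivAt_comp_abs (hasDerivAt_profile hγ |x|) profileDeriv_zero)).congr_deriv ?_
  simp only [solutionDeriv]
  ring

theorem hasDerivAt_solutionDeriv (hγ : γ ≠ 0) (ξ x : ℝ) :
    HasDerivAt (solutionDeriv γ c ξ) (γ ^ 2 * (solution γ c ξ x - |x| / c)) x := by
  have hsinh : HasDerivAt (fun y => γ * sinh (γ * y)) (γ * (cosh (γ * x) * γ)) x :=
    (hasDerivAt_const_mul γ).sinh.const_mul γ
  refine ((hsinh.const_mul ξ).fun_add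
    (hasDerivAt_sign_mul_comp_abs (g' := fun t => γ * exp (-(γ * t)) / c)
      (hasDerivAt_profileDeriv |x|) profileDeriv_zero)).congr_deriv ?_
  simp only [solution, profile]
  field_simp
  ring

theorem solutionDeriv_zero (ξ : ℝ) : solutionDeriv γ c ξ 0 = 0 := by
  simp [solutionDeriv]

theorem deriv_deriv_solution (hγ : γ ≠ 0) (ξ x : ℝ) :
    deriv (deriv (solution γ c ξ)) x = γ ^ 2 * (solution γ c ξ x - |x| / c) := by
  have hderiv : deriv (solution γ c ξ) = solutionDeriv γ c ξ :=
    funext fun y => (hasDerivAt_solution hγ ξ y).deriv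
  rw [hderiv]
  exact (hasDerivAt_solutionDeriv hγ ξ x).deriv

theorem eqOn_solution_of_deriv_deriv {s : Set ℝ} (hs : IsOpen s) (hs' : IsPreconnected s)
    (h0 : 0 ∈ s) (hγ : γ ≠ 0) {J : ℝ → ℝ} (hJ : ContDiffOn ℝ 2 J s)
    (hJ'' : ∀ x ∈ s, deriv (deriv J) x = γ ^ 2 * (J x - |x| / c)) (hJ'0 : deriv J 0 = 0) :
    EqOn J (solution γ c (J 0 - profile γ c 0)) s := by
  set ξ := J 0 - profile γ c 0
  have hJ' (x : ℝ) (hx : x ∈ s) : HasDerivAt J (deriv J x) x :=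
    ((hJ.differentiableOn (by norm_num)).differentiableAt (hs.mem_nhds hx)).hasDerivAt
  have hJ''' (x : ℝ) (hx : x ∈ s) : HasDerivAt (deriv J) (deriv (deriv J) x) x :=
    (((hJ.deriv_of_isOpen (m := 1) hs (by norm_num)).differentiableOn (by norm_num)
      ).differentiableAt (hs.mem_nhds hx)).hasDerivAt
  intro x hx
  refine sub_eq_zero.1 <| eqOn_zero_of_hasDerivAt_eq_sq_mul hs hs' (γ := γ)
    (w := fun y => J y - solution γ c ξ y) (w' := fun y => deriv J y - solutionDeriv γ c ξ y)
    (fun y hy => (hJ' y hy).fun_sub (hasDerivAt_solution hγ ξ y))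
    (fun y hy => ((hJ''' y hy).fun_sub (hasDerivAt_solutionDeriv hγ ξ y)).congr_deriv
      (by rw [hJ'' y hy]; ring))
    h0 (by simp [solution, ξ]) (by simp [hJ'0, solutionDeriv_zero]) hx

end RandomizationODE

end

/-- Let r, T > 0, a > 0 and γ = √(2(r + 1/T)). A twice
continuously differentiable even function J on (−a, a) satisfies
½ J''(x) − (r + 1/T) J(x) = −|x|/T on (−a, a) if and only if there exists
ξ ∈ ℝ with J(x) = ξ cosh(γx) + |x|/(rT+1) + e^{−γ|x|}/(γ(rT+1)) on (−a, a). -/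
theorem even_solutions_of_randomization_ODE
    (r T a : ℝ) (hr : 0 < r) (hT : 0 < T) (ha : 0 < a)
    (γ : ℝ) (hγ : γ = Real.sqrt (2 * (r + 1 / T)))
    (J : ℝ → ℝ)
    (hJ_smooth : ContDiffOn ℝ 2 J (Set.Ioo (-a) a))
    (hJ_even : ∀ x ∈ Set.Ioo (-a) a, J (-x) = J x) :
    (∀ x ∈ Set.Ioo (-a) a,
        (1 / 2) * deriv (deriv J) x - (r + 1 / T) * J x = -|x| / T)
      ↔ ∃ ξ : ℝ, ∀ x ∈ Set.Ioo (-a) a,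
        J x = ξ * Real.cosh (γ * x) + |x| / (r * T + 1)
          + Real.exp (-(γ * |x|)) / (γ * (r * T + 1)) := by
  have hγ0 : γ ≠ 0 := by rw [hγ]; positivity
  have hγ2 : γ ^ 2 = 2 * (r + 1 / T) := by rw [hγ]; exact sq_sqrt (by positivity)
  have hode (x y z : ℝ) :
      (1 / 2) * z - (r + 1 / T) * y = -|x| / T ↔ z = γ ^ 2 * (y - |x| / (r * T + 1)) := by
    rw [hγ2]
    field_simp
    constructor <;> intro h <;> linarith
  have hsolution (ξ x : ℝ) : ξ * cosh (γ * x) + |x| / (r * T + 1)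
      + exp (-(γ * |x|)) / (γ * (r * T + 1)) = RandomizationODE.solution γ (r * T + 1) ξ x :=
    add_assoc _ _ _
  have hs : IsOpen (Ioo (-a) a) := isOpen_Ioo
  have h0 : (0 : ℝ) ∈ Ioo (-a) a := ⟨neg_neg_of_pos ha, ha⟩
  simp only [hode, hsolution]
  constructor
  · intro hJ''
    have hJ'0 : deriv J 0 = 0 :=
      deriv_eq_zero_of_eventually_even (eventually_of_mem (hs.mem_nhds h0) hJ_even)
    exact ⟨_, RandomizationODE.eqOn_solution_of_deriv_deriv hs isPreconnected_Ioo h0 hγ0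
      hJ_smooth hJ'' hJ'0⟩
  · rintro ⟨ξ, hξ⟩ x hx
    have hJ : J =ᶠ[𝓝 x] RandomizationODE.solution γ (r * T + 1) ξ :=
      eventually_of_mem (hs.mem_nhds hx) hξ
    rw [hJ.deriv.deriv_eq, RandomizationODE.deriv_deriv_solution hγ0, hξ x hx]
end

section
/- Let r > 0, let z̃ be the unique positive solution of z sinh z = cosh z, and set x̃ = z̃/√(2r). Define V : ℝ → ℝ by V(x) = x̃ · cosh(√(2r) x) / cosh(√(2r) x̃). Then: (i) V(x̃) = x̃ and V(−x̃) = x̃; (ii) V'(x̃) = 1 and V'(−x̃) = −1 (smooth fit); and (iii) V(x) > |x| for every x ∈ (−x̃, x̃). -/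
open Real Set

lemma key_ineq (z : ℝ) (hz_pos : 0 < z) (hz_root : z * Real.sinh z = Real.cosh z)
    (u : ℝ) (hu0 : 0 ≤ u) (huz : u < z) : u * Real.cosh z < z * Real.cosh u := by
  set f : ℝ → ℝ := fun u => z * Real.cosh u - u * Real.cosh z with hf
  have hderiv : ∀ u : ℝ, HasDerivAt f (z * Real.sinh u - Real.cosh z) u := by
    intro u
    have h1 := (Real.hasDerivAt_cosh u).const_mul z
    have h2 : HasDerivAt (fun u : ℝ => u * Real.cosh z) (Real.cosh z) u := by
      simpa using (hasDerivAt_id u).mul_const (Real.cosh z)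
    exact h1.sub h2
  have hanti : StrictAntiOn f (Set.Icc 0 z) := by
    apply strictAntiOn_of_deriv_neg (convex_Icc 0 z)
    · exact (Continuous.sub (continuous_const.mul Real.continuous_cosh)
        (continuous_id.mul continuous_const)).continuousOn
    · intro u hu
      rw [interior_Icc] at hu
      rw [(hderiv u).deriv]
      have : Real.sinh u < Real.sinh z := Real.sinh_lt_sinh.mpr hu.2
      nlinarith
  have h0 : f z = 0 := by simp [hf]
  have := hanti (Set.mem_Icc.mpr ⟨hu0, le_of_lt huz⟩)
    (Set.mem_Icc.mpr ⟨le_of_lt hz_pos, le_refl z⟩) huz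
  rw [h0] at this
  simp only [hf] at this
  linarith

/-- Let r > 0, z̃ the unique positive solution of
z sinh z = cosh z, x̃ = z̃/√(2r), and V(x) = x̃ cosh(√(2r)x)/cosh(√(2r)x̃).
Then (i) V(x̃) = x̃ and V(−x̃) = x̃; (ii) V'(x̃) = 1 and V'(−x̃) = −1 (smooth
fit); (iii) V(x) > |x| for every x ∈ (−x̃, x̃). -/
theorem unconstrained_value_function_properties
    (r : ℝ) (hr : 0 < r)
    (z : ℝ) (hz_pos : 0 < z) (hz_root : z * Real.sinh z = Real.cosh z)
    (xt : ℝ) (hxt : xt = z / Real.sqrt (2 * r))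
    (V : ℝ → ℝ)
    (hV : ∀ x : ℝ, V x =
      xt * Real.cosh (Real.sqrt (2 * r) * x) / Real.cosh (Real.sqrt (2 * r) * xt)) :
    V xt = xt ∧ V (-xt) = xt ∧
      deriv V xt = 1 ∧ deriv V (-xt) = -1 ∧
      ∀ x ∈ Set.Ioo (-xt) xt, |x| < V x := by
  set s := Real.sqrt (2 * r) with hs_def
  have hs : 0 < s := Real.sqrt_pos.mpr (by linarith)
  have hsx : s * xt = z := by
    rw [hxt]; field_simp
  have hcz : Real.cosh (s * xt) = Real.cosh z := by rw [hsx]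
  have hczpos : 0 < Real.cosh z := Real.cosh_pos z
  have hxtpos : 0 < xt := by rw [hxt]; positivity
  have hVval : ∀ x, V x = xt * Real.cosh (s * x) / Real.cosh z := by
    intro x; rw [hV, hcz]
  have hVf : V = fun x => xt * Real.cosh (s * x) / Real.cosh z := funext hVval
  have hderiv : ∀ x : ℝ, deriv V x = xt * (s * Real.sinh (s * x)) / Real.cosh z := by
    intro x
    have h1 : HasDerivAt (fun x : ℝ => s * x) s x := by
      simpa using (hasDerivAt_id x).const_mul s
    have h2 : HasDerivAt (fun x => Real.cosh (s * x)) (Real.sinh (s * x) * s) x :=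
      (Real.hasDerivAt_cosh (s * x)).comp x h1
    have h3 : HasDerivAt V (xt * (Real.sinh (s * x) * s) / Real.cosh z) x := by
      rw [hVf]; exact (h2.const_mul xt).div_const _
    rw [h3.deriv]; ring
  refine ⟨?_, ?_, ?_, ?_, ?_⟩
  · rw [hVval, hsx]
    field_simp
  · rw [hVval]
    have : s * (-xt) = -z := by rw [mul_neg, hsx]
    rw [this, Real.cosh_neg]
    field_simp
  · rw [hderiv, hsx]
    have h : xt * (s * Real.sinh z) = Real.cosh z := by
      rw [← hz_root]; rw [← hsx]; ring
    rw [h, div_self (ne_of_gt hczpos)]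
  · rw [hderiv]
    have h1 : s * (-xt) = -z := by rw [mul_neg, hsx]
    rw [h1, Real.sinh_neg]
    have h : xt * (s * -Real.sinh z) = -Real.cosh z := by
      rw [← hz_root, ← hsx]; ring
    rw [h, neg_div, div_self (ne_of_gt hczpos)]
  · intro x hx
    rw [hVval]
    have habs : |x| < xt := abs_lt.mpr ⟨hx.1, hx.2⟩
    have hu0 : 0 ≤ s * |x| := by positivity
    have huz : s * |x| < z := by
      rw [← hsx]
      exact mul_lt_mul_of_pos_left habs hs
    have hkey := key_ineq z hz_pos hz_root (s * |x|) hu0 huz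
    have hcabs : Real.cosh (s * |x|) = Real.cosh (s * x) := by
      rw [show s * |x| = |s * x| by rw [abs_mul, abs_of_pos hs], Real.cosh_abs]
    rw [hcabs] at hkey
    rw [lt_div_iff₀ hczpos]
    have hx' : s * |x| * Real.cosh z < s * xt * Real.cosh (s * x) := by
      rw [hsx]; linarith
    nlinarith [Real.cosh_pos (s * x)]
end
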